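/- Let f : ℝ → ℝ be twice differentiable on (0,∞) and let v = (x,y,t) ∈ ℝ³ with v ≠ 0. Then the sub-Laplacian of the radial function f ∘ ρ satisfies Δ_H(f ∘ ρ)(v) = ((x² + y²)/ρ(v)²) · ( f''(ρ(v)) + 3 f'(ρ(v))/ρ(v) ). -/

import Mathlib

noncomputable section

/-- The Korányi norm ρ(x,y,t) = ((x²+y²)² + t²)^{1/4} on ℝ³ (coordinates v 0 = x,
v 1 = y, v 2 = t). -/
def rho3 (v : Fin 3 → ℝ) : ℝ := ((v 0 ^ 2 + v 1 ^ 2) ^ 2 + v 2 ^ 2) ^ ((1 : ℝ) / 4)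

/-- The horizontal derivative X u(v) = ∂ₓ u(v) + 2y ∂ₜ u(v). -/
def Xd (u : (Fin 3 → ℝ) → ℝ) (v : Fin 3 → ℝ) : ℝ :=
  fderiv ℝ u v (Pi.single 0 1) + 2 * v 1 * fderiv ℝ u v (Pi.single 2 1)

/-- The horizontal derivative Y u(v) = ∂_y u(v) − 2x ∂ₜ u(v). -/
def Yd (u : (Fin 3 → ℝ) → ℝ) (v : Fin 3 → ℝ) : ℝ :=
  fderiv ℝ u v (Pi.single 1 1) - 2 * v 0 * fderiv ℝ u v (Pi.single 2 1)

/-- The sub-Laplacian Δ_H u = X(X u) + Y(Y u). -/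
def DeltaHd (u : (Fin 3 → ℝ) → ℝ) (v : Fin 3 → ℝ) : ℝ := Xd (Xd u) v + Yd (Yd u) v

/-!
Since X and Y are first-order operators, for any C² function u and any f that is twice
differentiable at u(v), `Δ_H(f ∘ u) = f''(u) (|X u|² + |Y u|²) + f'(u) Δ_H u`.
For the polynomial `u = ρ⁴ = (x²+y²)² + t²` one computes `|X u|² + |Y u|² = 16 (x²+y²) ρ⁴`
and `Δ_H u = 24 (x²+y²)`; applying the formula with `s ↦ s^{1/4}` gives
`|X ρ|² + |Y ρ|² = (x²+y²)/ρ²` and `Δ_H ρ = 3 (x²+y²)/ρ³`, and applying it once more with `f`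
gives the theorem.
-/

open Filter Topology

section

variable {E : Type*} [NormedAddCommGroup E] [NormedSpace ℝ E]

def derivAlong (e : E → E) (u : E → ℝ) (v : E) : ℝ := fderiv ℝ u v (e v)

variable {e : E → E} {u w : E → ℝ} {v : E}

theorem derivAlong_congr_of_eventuallyEq (h : u =ᶠ[𝓝 v] w) :
    derivAlong e u v = derivAlong e w v := by
  rw [derivAlong, derivAlong, h.fderiv_eq]

theorem derivAlong_comp {g : ℝ → ℝ} (hg : DifferentiableAt ℝ g (u v))
    (hu : DifferentiableAt ℝ u v) :
    derivAlong e (fun x => g (u x)) v = deriv g (u v) * derivAlong e u v := by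
  have h : HasFDerivAt (fun x => g (u x)) (deriv g (u v) • fderiv ℝ u v) v :=
    hg.hasDerivAt.comp_hasFDerivAt v hu.hasFDerivAt
  rw [derivAlong, h.fderiv]
  rfl

theorem derivAlong_mul (hu : DifferentiableAt ℝ u v) (hw : DifferentiableAt ℝ w v) :
    derivAlong e (fun x => u x * w x) v = u v * derivAlong e w v + w v * derivAlong e u v := by
  rw [derivAlong, fderiv_fun_mul hu hw]
  rfl

theorem ContDiffAt.differentiableAt_derivAlong (hu : ContDiffAt ℝ 2 u v)
    (he : DifferentiableAt ℝ e v) : DifferentiableAt ℝ (derivAlong e u) v :=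
  ((hu.fderiv_right (m := 1) le_rfl).differentiableAt one_ne_zero).clm_apply he

theorem derivAlong_derivAlong_comp {g : ℝ → ℝ} (hg : ∀ᶠ s in 𝓝 (u v), DifferentiableAt ℝ g s)
    (hg' : DifferentiableAt ℝ (deriv g) (u v)) (hu : ContDiffAt ℝ 2 u v)
    (he : DifferentiableAt ℝ e v) :
    derivAlong e (derivAlong e fun x => g (u x)) v =
      deriv (deriv g) (u v) * derivAlong e u v ^ 2 +
        deriv g (u v) * derivAlong e (derivAlong e u) v := by
  have hu₁ : DifferentiableAt ℝ u v := hu.differentiableAt two_ne_zero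
  have first_order :
      derivAlong e (fun x => g (u x)) =ᶠ[𝓝 v] fun x => deriv g (u x) * derivAlong e u x := by
    filter_upwards [hu.continuousAt.eventually hg, hu.eventually (by simp)] with x hgx hux
    exact derivAlong_comp hgx (hux.differentiableAt two_ne_zero)
  have hgu' : DifferentiableAt ℝ (fun x => deriv g (u x)) v := hg'.comp v hu₁
  rw [derivAlong_congr_of_eventuallyEq first_order,
    derivAlong_mul hgu' (hu.differentiableAt_derivAlong he), derivAlong_comp hg' hu₁]
  ring

end

def horizontalX (v : Fin 3 → ℝ) : Fin 3 → ℝ := Pi.single 0 1 + (2 * v 1) • Pi.single 2 1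

def horizontalY (v : Fin 3 → ℝ) : Fin 3 → ℝ := Pi.single 1 1 - (2 * v 0) • Pi.single 2 1

theorem Xd_eq_derivAlong : Xd = derivAlong horizontalX := by
  funext u v
  simp [Xd, derivAlong, horizontalX]

theorem Yd_eq_derivAlong : Yd = derivAlong horizontalY := by
  funext u v
  simp [Yd, derivAlong, horizontalY]

theorem differentiable_horizontalX : Differentiable ℝ horizontalX := by
  unfold horizontalX
  fun_prop

theorem differentiable_horizontalY : Differentiable ℝ horizontalY := by
  unfold horizontalY
  fun_prop

theorem DeltaHd_comp {g : ℝ → ℝ} {u : (Fin 3 → ℝ) → ℝ} {v : Fin 3 → ℝ}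
    (hg : ∀ᶠ s in 𝓝 (u v), DifferentiableAt ℝ g s) (hg' : DifferentiableAt ℝ (deriv g) (u v))
    (hu : ContDiffAt ℝ 2 u v) :
    DeltaHd (fun x => g (u x)) v =
      deriv (deriv g) (u v) * (Xd u v ^ 2 + Yd u v ^ 2) + deriv g (u v) * DeltaHd u v := by
  simp only [DeltaHd, Xd_eq_derivAlong, Yd_eq_derivAlong]
  rw [derivAlong_derivAlong_comp hg hg' hu (differentiable_horizontalX v),
    derivAlong_derivAlong_comp hg hg' hu (differentiable_horizontalY v)]
  ring

def quarticGauge (v : Fin 3 → ℝ) : ℝ := (v 0 ^ 2 + v 1 ^ 2) ^ 2 + v 2 ^ 2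

theorem Xd_quarticGauge :
    Xd quarticGauge = fun w => 4 * (w 0 * (w 0 ^ 2 + w 1 ^ 2) + w 1 * w 2) := by
  funext w
  rw [Xd_eq_derivAlong, derivAlong]
  unfold quarticGauge horizontalX
  simp (disch := fun_prop) only [fderiv_fun_add, fderiv_fun_pow, fderiv_apply]
  simp
  ring

theorem Yd_quarticGauge :
    Yd quarticGauge = fun w => 4 * (w 1 * (w 0 ^ 2 + w 1 ^ 2) - w 0 * w 2) := by
  funext w
  rw [Yd_eq_derivAlong, derivAlong]
  unfold quarticGauge horizontalY
  simp (disch := fun_prop) only [fderiv_fun_add, fderiv_fun_pow, fderiv_apply]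
  simp
  ring

theorem DeltaHd_quarticGauge (w : Fin 3 → ℝ) :
    DeltaHd quarticGauge w = 24 * (w 0 ^ 2 + w 1 ^ 2) := by
  rw [DeltaHd, Xd_quarticGauge, Yd_quarticGauge, Xd_eq_derivAlong, Yd_eq_derivAlong,
    derivAlong, derivAlong]
  unfold horizontalX horizontalY
  simp (disch := fun_prop) only [fderiv_fun_add, fderiv_fun_sub, fderiv_fun_mul, fderiv_fun_pow,
    fderiv_apply]
  simp
  ring

theorem Xd_quarticGauge_sq_add_Yd_quarticGauge_sq (w : Fin 3 → ℝ) :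
    Xd quarticGauge w ^ 2 + Yd quarticGauge w ^ 2 =
      16 * (w 0 ^ 2 + w 1 ^ 2) * quarticGauge w := by
  rw [Xd_quarticGauge, Yd_quarticGauge, quarticGauge]
  ring

theorem quarticGauge_pos {v : Fin 3 → ℝ} (hv : v ≠ 0) : 0 < quarticGauge v := by
  unfold quarticGauge
  by_contra! h
  apply hv
  have hz : v 0 ^ 2 + v 1 ^ 2 = 0 := by
    nlinarith [sq_nonneg (v 0 ^ 2 + v 1 ^ 2), sq_nonneg (v 2)]
  have h0 : v 0 = 0 := by nlinarith [sq_nonneg (v 0), sq_nonneg (v 1)]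
  have h1 : v 1 = 0 := by nlinarith [sq_nonneg (v 0), sq_nonneg (v 1)]
  have h2 : v 2 = 0 := by nlinarith [sq_nonneg (v 2)]
  ext i
  fin_cases i <;> assumption

theorem rho3_eq_rpow (w : Fin 3 → ℝ) : rho3 w = quarticGauge w ^ (1 / 4 : ℝ) := rfl

theorem quarticGauge_eq_rho3_pow (w : Fin 3 → ℝ) : quarticGauge w = rho3 w ^ 4 := by
  rw [rho3_eq_rpow, ← Real.rpow_natCast, ← Real.rpow_mul (by unfold quarticGauge; positivity)]
  norm_num

theorem rho3_pos {v : Fin 3 → ℝ} (hv : v ≠ 0) : 0 < rho3 v :=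
  Real.rpow_pos_of_pos (quarticGauge_pos hv) _

theorem contDiffAt_rho3 {v : Fin 3 → ℝ} (hv : v ≠ 0) : ContDiffAt ℝ 2 rho3 v :=
  (Real.contDiffAt_rpow_const_of_ne (quarticGauge_pos hv).ne').comp v
    (by unfold quarticGauge; fun_prop)

theorem deriv_rpow_quarter {s : ℝ} (hs : s ≠ 0) :
    deriv (fun s => s ^ (1 / 4 : ℝ)) s = s ^ (1 / 4 : ℝ) / (4 * s) := by
  rw [Real.deriv_rpow_const, Real.rpow_sub_one hs]
  ring

theorem deriv_deriv_rpow_quarter {s : ℝ} (hs : s ≠ 0) :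
    deriv (deriv fun s => s ^ (1 / 4 : ℝ)) s = -3 * s ^ (1 / 4 : ℝ) / (16 * s ^ 2) := by
  rw [Real.deriv_rpow_const', deriv_const_mul _ (Real.differentiableAt_rpow_const_of_ne _ hs),
    Real.deriv_rpow_const, Real.rpow_sub_one hs, Real.rpow_sub_one hs]
  field_simp
  ring

theorem Xd_rho3_sq_add_Yd_rho3_sq {v : Fin 3 → ℝ} (hv : v ≠ 0) :
    Xd rho3 v ^ 2 + Yd rho3 v ^ 2 = (v 0 ^ 2 + v 1 ^ 2) / rho3 v ^ 2 := by
  have hQ := quarticGauge_pos hv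
  have hg := Real.differentiableAt_rpow_const_of_ne (1 / 4 : ℝ) hQ.ne'
  have hQd : DifferentiableAt ℝ quarticGauge v := by unfold quarticGauge; fun_prop
  have hρ := (rho3_pos hv).ne'
  have grad_sq := Xd_quarticGauge_sq_add_Yd_quarticGauge_sq v
  rw [quarticGauge_eq_rho3_pow] at grad_sq
  rw [Xd_eq_derivAlong, Yd_eq_derivAlong]
  change derivAlong horizontalX (fun w => quarticGauge w ^ (1 / 4 : ℝ)) v ^ 2
    + derivAlong horizontalY (fun w => quarticGauge w ^ (1 / 4 : ℝ)) v ^ 2 = _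
  rw [derivAlong_comp hg hQd, derivAlong_comp hg hQd, ← Xd_eq_derivAlong, ← Yd_eq_derivAlong,
    deriv_rpow_quarter hQ.ne', ← rho3_eq_rpow, quarticGauge_eq_rho3_pow]
  field_simp
  linear_combination grad_sq

theorem DeltaHd_rho3 {v : Fin 3 → ℝ} (hv : v ≠ 0) :
    DeltaHd rho3 v = 3 * (v 0 ^ 2 + v 1 ^ 2) / rho3 v ^ 3 := by
  have hQ := quarticGauge_pos hv
  have hg : ∀ᶠ s in 𝓝 (quarticGauge v), DifferentiableAt ℝ (fun s => s ^ (1 / 4 : ℝ)) s :=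
    eventually_of_mem (Ioi_mem_nhds hQ) fun s hs =>
      Real.differentiableAt_rpow_const_of_ne _ (ne_of_gt hs)
  have hg' : DifferentiableAt ℝ (deriv fun s => s ^ (1 / 4 : ℝ)) (quarticGauge v) := by
    rw [Real.deriv_rpow_const']
    exact (Real.differentiableAt_rpow_const_of_ne _ hQ.ne').const_mul _
  have hρ := (rho3_pos hv).ne'
  change DeltaHd (fun w => quarticGauge w ^ (1 / 4 : ℝ)) v = _
  rw [DeltaHd_comp hg hg' (by unfold quarticGauge; fun_prop), deriv_rpow_quarter hQ.ne',
    deriv_deriv_rpow_quarter hQ.ne', Xd_quarticGauge_sq_add_Yd_quarticGauge_sq,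
    DeltaHd_quarticGauge, ← rho3_eq_rpow, quarticGauge_eq_rho3_pow]
  field_simp
  ring

/-- for f twice differentiable on (0,∞) and v ≠ 0,
`Δ_H(f ∘ ρ)(v) = ((x²+y²)/ρ(v)²)·(f''(ρ(v)) + 3 f'(ρ(v))/ρ(v))`. -/
theorem stmt15 (f : ℝ → ℝ)
    (hf : ∀ s ∈ Set.Ioi (0 : ℝ), DifferentiableAt ℝ f s)
    (hf' : ∀ s ∈ Set.Ioi (0 : ℝ), DifferentiableAt ℝ (deriv f) s)
    (v : Fin 3 → ℝ) (hv : v ≠ 0) :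
    DeltaHd (fun w => f (rho3 w)) v =
      ((v 0 ^ 2 + v 1 ^ 2) / rho3 v ^ 2) *
        (deriv (deriv f) (rho3 v) + 3 * deriv f (rho3 v) / rho3 v) := by
  have hρ := rho3_pos hv
  rw [DeltaHd_comp (eventually_of_mem (Ioi_mem_nhds hρ) hf) (hf' _ hρ) (contDiffAt_rho3 hv),
    Xd_rho3_sq_add_Yd_rho3_sq hv, DeltaHd_rho3 hv]
  ring

end
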